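/- In the coordinate quasi-Codazzi setup on U, assume both relative torsions vanish: T⁺(X,Y) = 0 and T⁻(X,Y) = 0 for all smooth vector fields X, Y (i.e. the data form a quasi-Codazzi structure). Then: (a) C is totally symmetric, i.e. C(X,Y,Z) = C(Y,X,Z) and C(X,Y,Z) = C(X,Z,Y) for all smooth vector fields X, Y, Z; and (b) the Kossowski pseudo-connection satisfies Γ(X,Y,Z)(x) = p x ((∇⁺_X(Φ⁺Y))(x)) (Φ⁻ x (Z x)) + p x (Φ⁺ x (Z x)) ((∇⁻_X(Φ⁻Y))(x)) for all smooth vector fields X, Y, Z and all x ∈ U. (Paper's Proposition 3.20, part (1).) -/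

import Mathlib

noncomputable section

open Set

/-- ℝⁿ. -/
abbrev Vn (n : ℕ) : Type := Fin n → ℝ

/-- Pairings (fiber metrics pairing `E⁺` with `E⁻`) on the trivialized bundle. -/
abbrev Pairn (n : ℕ) : Type := Vn n →L[ℝ] Vn n →L[ℝ] ℝ

/-- Connection forms on the trivialized bundle. -/
abbrev Connn (n : ℕ) : Type := Vn n →L[ℝ] Vn n →L[ℝ] Vn n

/-- Bundle maps `TU → E±` in the trivialization. -/
abbrev Bdln (n : ℕ) : Type := Vn n →L[ℝ] Vn n

/-- Covariant derivative of the section `ν` along the vector field `X`,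
for the connection with connection form `A`. -/
def cov {n : ℕ} (A : Vn n → Connn n) (X ν : Vn n → Vn n) (x : Vn n) : Vn n :=
  fderiv ℝ ν x (X x) + A x (X x) (ν x)

/-- Lie bracket of vector fields on an open set of ℝⁿ. -/
def lieB {n : ℕ} (X Y : Vn n → Vn n) (x : Vn n) : Vn n :=
  fderiv ℝ Y x (X x) - fderiv ℝ X x (Y x)

/-- The section `Φ±Y : x ↦ Φ± x (Y x)`. -/
def secPhi {n : ℕ} (Φ : Vn n → Bdln n) (Y : Vn n → Vn n) : Vn n → Vn n :=
  fun x => Φ x (Y x)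

/-- The induced (possibly degenerate) metric `h x y z = 2 p x (Φ⁺ x y) (Φ⁻ x z)`. -/
def hmet {n : ℕ} (p : Vn n → Pairn n) (Φp Φm : Vn n → Bdln n) (x y z : Vn n) : ℝ :=
  2 * p x (Φp x y) (Φm x z)

/-- The generalized Amari–Chentsov cubic tensor. -/
def Ctensor {n : ℕ} (p : Vn n → Pairn n) (Ap Am : Vn n → Connn n)
    (Φp Φm : Vn n → Bdln n) (X Y Z : Vn n → Vn n) (x : Vn n) : ℝ :=
  -2 * (p x (cov Ap X (secPhi Φp Y) x) (Φm x (Z x))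
        - p x (Φp x (Z x)) (cov Am X (secPhi Φm Y) x))

/-- The relative torsion `T(X,Y) = ∇_X(ΦY) − ∇_Y(ΦX) − Φ[X,Y]`. -/
def Ttor {n : ℕ} (A : Vn n → Connn n) (Φ : Vn n → Bdln n)
    (X Y : Vn n → Vn n) (x : Vn n) : Vn n :=
  cov A X (secPhi Φ Y) x - cov A Y (secPhi Φ X) x - Φ x (lieB X Y x)

/-- The Kossowski pseudo-connection. -/
def Koss {n : ℕ} (p : Vn n → Pairn n) (Φp Φm : Vn n → Bdln n)
    (X Y Z : Vn n → Vn n) (x : Vn n) : ℝ :=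
  fderiv ℝ (fun y => p y (Φp y (Y y)) (Φm y (Z y))) x (X x)
  + fderiv ℝ (fun y => p y (Φp y (Z y)) (Φm y (X y))) x (Y x)
  - fderiv ℝ (fun y => p y (Φp y (X y)) (Φm y (Y y))) x (Z x)
  - p x (Φp x (X x)) (Φm x (lieB Y Z x))
  + p x (Φp x (Y x)) (Φm x (lieB Z X x))
  + p x (Φp x (Z x)) (Φm x (lieB X Y x))

/-- The curvature of a connection form `A` at `x` in directions `v`, `w`. -/
def curvA {n : ℕ} (A : Vn n → Connn n) (x v w : Vn n) : Vn n →L[ℝ] Vn n :=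
  fderiv ℝ A x v w - fderiv ℝ A x w v + (A x v).comp (A x w) - (A x w).comp (A x v)

/-! The duality of `A⁺` and `A⁻` gives the Leibniz rule
`X·p(μ, ν) = p(∇⁺_X μ, ν) + p(μ, ∇⁻_X ν)`. Differentiating the Lagrangian identity
`p(Φ⁺Y, Φ⁻Z) = p(Φ⁺Z, Φ⁻Y)` with it makes `C` symmetric in its last two slots. Vanishing torsion
writes `Φ±[X,Y]` as `∇±_X(Φ±Y) − ∇±_Y(Φ±X)`, so the Lagrangian identity evaluated at `[X,Y]`
makes `C` symmetric in its first two slots. Expanding `Γ` by the Leibniz rule and `T⁻ = 0` leaves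
the claimed expression plus `(C(Z,X,Y) − C(Y,Z,X))/2`, which vanishes by total symmetry. -/

section
variable {n : ℕ} {p : Vn n → Pairn n} {Ap Am : Vn n → Connn n} {Φp Φm : Vn n → Bdln n}
  {X Y Z : Vn n → Vn n} {x : Vn n}

theorem fderiv_pairing_eq_cov {μ ν : Vn n → Vn n} (hp : DifferentiableAt ℝ p x)
    (hμ : DifferentiableAt ℝ μ x) (hν : DifferentiableAt ℝ ν x)
    (hdual : ∀ v a b, fderiv ℝ p x v a b = p x (Ap x v a) b + p x a (Am x v b)) :
    fderiv ℝ (fun y => p y (μ y) (ν y)) x (X x)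
      = p x (cov Ap X μ x) (ν x) + p x (μ x) (cov Am X ν x) := by
  rw [fderiv_clm_apply (hp.clm_apply hμ) hν, fderiv_clm_apply hp hμ]
  simp only [cov, add_apply, ContinuousLinearMap.comp_apply,
    ContinuousLinearMap.flip_apply, map_add, hdual]
  ring

theorem fderiv_pairing_secPhi_eq_cov (hp : DifferentiableAt ℝ p x)
    (hΦp : DifferentiableAt ℝ Φp x) (hΦm : DifferentiableAt ℝ Φm x)
    (hY : DifferentiableAt ℝ Y x) (hZ : DifferentiableAt ℝ Z x)
    (hdual : ∀ v a b, fderiv ℝ p x v a b = p x (Ap x v a) b + p x a (Am x v b)) :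
    fderiv ℝ (fun y => p y (Φp y (Y y)) (Φm y (Z y))) x (X x)
      = p x (cov Ap X (secPhi Φp Y) x) (Φm x (Z x))
        + p x (Φp x (Y x)) (cov Am X (secPhi Φm Z) x) :=
  fderiv_pairing_eq_cov hp (hΦp.clm_apply hY) (hΦm.clm_apply hZ) hdual

theorem apply_lieB_of_ttor_eq_zero {A : Vn n → Connn n} {Φ : Vn n → Bdln n}
    (h : Ttor A Φ X Y x = 0) :
    Φ x (lieB X Y x) = cov A X (secPhi Φ Y) x - cov A Y (secPhi Φ X) x :=
  (sub_eq_zero.mp h).symm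

theorem ctensor_comm_right (hp : DifferentiableAt ℝ p x)
    (hΦp : DifferentiableAt ℝ Φp x) (hΦm : DifferentiableAt ℝ Φm x)
    (hY : DifferentiableAt ℝ Y x) (hZ : DifferentiableAt ℝ Z x)
    (hdual : ∀ v a b, fderiv ℝ p x v a b = p x (Ap x v a) b + p x a (Am x v b))
    (hLag : ∀ᶠ y in nhds x, ∀ a b, p y (Φp y a) (Φm y b) = p y (Φp y b) (Φm y a)) :
    Ctensor p Ap Am Φp Φm X Y Z x = Ctensor p Ap Am Φp Φm X Z Y x := by
  have hLagYZ : (fun y => p y (Φp y (Y y)) (Φm y (Z y)))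
      =ᶠ[nhds x] fun y => p y (Φp y (Z y)) (Φm y (Y y)) :=
    hLag.mono fun y hy => hy (Y y) (Z y)
  have hsymm := congrArg (fun L : Vn n →L[ℝ] ℝ => L (X x)) (hLagYZ.fderiv_eq (𝕜 := ℝ))
  rw [fderiv_pairing_secPhi_eq_cov hp hΦp hΦm hY hZ hdual,
    fderiv_pairing_secPhi_eq_cov hp hΦp hΦm hZ hY hdual] at hsymm
  simp only [Ctensor]
  linarith

theorem ctensor_comm_left
    (hLag : ∀ a b, p x (Φp x a) (Φm x b) = p x (Φp x b) (Φm x a))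
    (hTp : Ttor Ap Φp X Y x = 0) (hTm : Ttor Am Φm X Y x = 0) :
    Ctensor p Ap Am Φp Φm X Y Z x = Ctensor p Ap Am Φp Φm Y X Z x := by
  have hbracket := hLag (lieB X Y x) (Z x)
  rw [apply_lieB_of_ttor_eq_zero hTp, apply_lieB_of_ttor_eq_zero hTm, map_sub, map_sub,
    sub_apply] at hbracket
  simp only [Ctensor]
  linarith

theorem koss_eq_add_ctensor (hp : DifferentiableAt ℝ p x)
    (hΦp : DifferentiableAt ℝ Φp x) (hΦm : DifferentiableAt ℝ Φm x)
    (hX : DifferentiableAt ℝ X x) (hY : DifferentiableAt ℝ Y x) (hZ : DifferentiableAt ℝ Z x)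
    (hdual : ∀ v a b, fderiv ℝ p x v a b = p x (Ap x v a) b + p x a (Am x v b))
    (hTYZ : Ttor Am Φm Y Z x = 0) (hTZX : Ttor Am Φm Z X x = 0)
    (hTXY : Ttor Am Φm X Y x = 0) :
    Koss p Φp Φm X Y Z x
      = p x (cov Ap X (secPhi Φp Y) x) (Φm x (Z x))
        + p x (Φp x (Z x)) (cov Am X (secPhi Φm Y) x)
        + (Ctensor p Ap Am Φp Φm Z X Y x - Ctensor p Ap Am Φp Φm Y Z X x) / 2 := by
  rw [Koss, fderiv_pairing_secPhi_eq_cov hp hΦp hΦm hY hZ hdual,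
    fderiv_pairing_secPhi_eq_cov hp hΦp hΦm hZ hX hdual,
    fderiv_pairing_secPhi_eq_cov hp hΦp hΦm hX hY hdual,
    apply_lieB_of_ttor_eq_zero hTYZ, apply_lieB_of_ttor_eq_zero hTZX,
    apply_lieB_of_ttor_eq_zero hTXY]
  simp only [Ctensor, map_sub]
  ring

end

theorem statement14_general {n : ℕ} (U : Set (Vn n)) (hUopen : IsOpen U)
    (p : Vn n → Pairn n) (hpsmooth : ContDiffOn ℝ (⊤ : ℕ∞) p U)
    (Ap Am : Vn n → Connn n)
    (hdual : ∀ x ∈ U, ∀ v a b : Vn n,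
      fderiv ℝ p x v a b = p x (Ap x v a) b + p x a (Am x v b))
    (Φp Φm : Vn n → Bdln n)
    (hΦpsmooth : ContDiffOn ℝ (⊤ : ℕ∞) Φp U) (hΦmsmooth : ContDiffOn ℝ (⊤ : ℕ∞) Φm U)
    (hLag : ∀ x ∈ U, ∀ y z : Vn n, p x (Φp x y) (Φm x z) = p x (Φp x z) (Φm x y))
    -- vanishing of both relative torsions
    (hTp : ∀ X Y : Vn n → Vn n,
      ContDiffOn ℝ (⊤ : ℕ∞) X U → ContDiffOn ℝ (⊤ : ℕ∞) Y U →
      ∀ x ∈ U, Ttor Ap Φp X Y x = 0)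
    (hTm : ∀ X Y : Vn n → Vn n,
      ContDiffOn ℝ (⊤ : ℕ∞) X U → ContDiffOn ℝ (⊤ : ℕ∞) Y U →
      ∀ x ∈ U, Ttor Am Φm X Y x = 0) :
    -- (a) C is totally symmetric
    (∀ X Y Z : Vn n → Vn n,
      ContDiffOn ℝ (⊤ : ℕ∞) X U → ContDiffOn ℝ (⊤ : ℕ∞) Y U → ContDiffOn ℝ (⊤ : ℕ∞) Z U →
      ∀ x ∈ U,
        Ctensor p Ap Am Φp Φm X Y Z x = Ctensor p Ap Am Φp Φm Y X Z x ∧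
        Ctensor p Ap Am Φp Φm X Y Z x = Ctensor p Ap Am Φp Φm X Z Y x) ∧
    -- (b) the Kossowski pseudo-connection identity
    (∀ X Y Z : Vn n → Vn n,
      ContDiffOn ℝ (⊤ : ℕ∞) X U → ContDiffOn ℝ (⊤ : ℕ∞) Y U → ContDiffOn ℝ (⊤ : ℕ∞) Z U →
      ∀ x ∈ U,
        Koss p Φp Φm X Y Z x
          = p x (cov Ap X (secPhi Φp Y) x) (Φm x (Z x))
            + p x (Φp x (Z x)) (cov Am X (secPhi Φm Y) x)) := by
  have hdiff : ∀ {F : Type} [NormedAddCommGroup F] [NormedSpace ℝ F] {f : Vn n → F},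
      ContDiffOn ℝ (⊤ : ℕ∞) f U → ∀ x ∈ U, DifferentiableAt ℝ f x :=
    fun hf x hx => (hf.differentiableOn (by simp)).differentiableAt (hUopen.mem_nhds hx)
  have hC : ∀ X Y Z : Vn n → Vn n,
      ContDiffOn ℝ (⊤ : ℕ∞) X U → ContDiffOn ℝ (⊤ : ℕ∞) Y U → ContDiffOn ℝ (⊤ : ℕ∞) Z U →
      ∀ x ∈ U,
        Ctensor p Ap Am Φp Φm X Y Z x = Ctensor p Ap Am Φp Φm Y X Z x ∧
        Ctensor p Ap Am Φp Φm X Y Z x = Ctensor p Ap Am Φp Φm X Z Y x :=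
    fun X Y Z hX hY hZ x hx =>
      ⟨ctensor_comm_left (hLag x hx) (hTp X Y hX hY x hx) (hTm X Y hX hY x hx),
        ctensor_comm_right (hdiff hpsmooth x hx) (hdiff hΦpsmooth x hx)
          (hdiff hΦmsmooth x hx) (hdiff hY x hx) (hdiff hZ x hx) (hdual x hx)
          (Filter.eventually_of_mem (hUopen.mem_nhds hx) hLag)⟩
  refine ⟨hC, fun X Y Z hX hY hZ x hx => ?_⟩
  have hCyclic : Ctensor p Ap Am Φp Φm Z X Y x = Ctensor p Ap Am Φp Φm Y Z X x :=
    (hC Z X Y hZ hX hY x hx).2.trans (hC Z Y X hZ hY hX x hx).1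
  rw [koss_eq_add_ctensor (hdiff hpsmooth x hx) (hdiff hΦpsmooth x hx)
    (hdiff hΦmsmooth x hx) (hdiff hX x hx) (hdiff hY x hx) (hdiff hZ x hx) (hdual x hx)
    (hTm Y Z hY hZ x hx) (hTm Z X hZ hX x hx) (hTm X Y hX hY x hx), hCyclic, sub_self,
    zero_div, add_zero]

/-- Paper's Proposition 3.20, part (1): in the coordinate quasi-Codazzi setup,
if both relative torsions vanish (quasi-Codazzi structure), then (a) the
generalized cubic tensor `C` is totally symmetric, and (b) the Kossowski
pseudo-connection satisfies `Γ(X,Y,Z) = p(∇⁺_X(Φ⁺Y), Φ⁻Z) + p(Φ⁺Z, ∇⁻_X(Φ⁻Y))`. -/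
theorem statement14 {n : ℕ} (U : Set (Vn n)) (hUopen : IsOpen U)
    (p : Vn n → Pairn n) (hpsmooth : ContDiffOn ℝ (⊤ : ℕ∞) p U)
    (Ap Am : Vn n → Connn n)
    (hApsmooth : ContDiffOn ℝ (⊤ : ℕ∞) Ap U) (hAmsmooth : ContDiffOn ℝ (⊤ : ℕ∞) Am U)
    (hdual : ∀ x ∈ U, ∀ v a b : Vn n,
      fderiv ℝ p x v a b = p x (Ap x v a) b + p x a (Am x v b))
    (Φp Φm : Vn n → Bdln n)
    (hΦpsmooth : ContDiffOn ℝ (⊤ : ℕ∞) Φp U) (hΦmsmooth : ContDiffOn ℝ (⊤ : ℕ∞) Φm U)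
    (hLag : ∀ x ∈ U, ∀ y z : Vn n, p x (Φp x y) (Φm x z) = p x (Φp x z) (Φm x y))
    -- vanishing of both relative torsions
    (hTp : ∀ X Y : Vn n → Vn n,
      ContDiffOn ℝ (⊤ : ℕ∞) X U → ContDiffOn ℝ (⊤ : ℕ∞) Y U →
      ∀ x ∈ U, Ttor Ap Φp X Y x = 0)
    (hTm : ∀ X Y : Vn n → Vn n,
      ContDiffOn ℝ (⊤ : ℕ∞) X U → ContDiffOn ℝ (⊤ : ℕ∞) Y U →
      ∀ x ∈ U, Ttor Am Φm X Y x = 0) :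
    -- (a) C is totally symmetric
    (∀ X Y Z : Vn n → Vn n,
      ContDiffOn ℝ (⊤ : ℕ∞) X U → ContDiffOn ℝ (⊤ : ℕ∞) Y U → ContDiffOn ℝ (⊤ : ℕ∞) Z U →
      ∀ x ∈ U,
        Ctensor p Ap Am Φp Φm X Y Z x = Ctensor p Ap Am Φp Φm Y X Z x ∧
        Ctensor p Ap Am Φp Φm X Y Z x = Ctensor p Ap Am Φp Φm X Z Y x) ∧
    -- (b) the Kossowski pseudo-connection identity
    (∀ X Y Z : Vn n → Vn n,
      ContDiffOn ℝ (⊤ : ℕ∞) X U → ContDiffOn ℝ (⊤ : ℕ∞) Y U → ContDiffOn ℝ (⊤ : ℕ∞) Z U →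
      ∀ x ∈ U,
        Koss p Φp Φm X Y Z x
          = p x (cov Ap X (secPhi Φp Y) x) (Φm x (Z x))
            + p x (Φp x (Z x)) (cov Am X (secPhi Φm Y) x)) :=
  statement14_general U hUopen p hpsmooth Ap Am hdual Φp Φm hΦpsmooth hΦmsmooth hLag hTp hTm
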